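/- arXiv:2601.08650 — 4 statements merged into one kernel-verified Lean document; each statement's English description precedes it below -/
import Mathlib

section
/- Let α ∈ (0,1), f ∈ C¹([0,∞), ℝ), g ∈ C([0,∞), ℝ). If f − f(0) = Y_α * g on [0,∞), then Y_{1−α} * f' = g on [0,∞). -/
/-!
Write `I^ν φ = Y_ν * φ`. The kernels form a convolution semigroup,
`Y_a * Y_b = Y_{a+b}`, which after scaling is the Beta integral `B(a, b) = Γ(a)Γ(b)/Γ(a+b)`;
by Fubini on the triangle `0 < v < u ≤ t` this gives `I^a (I^b φ) = I^{a+b} φ` for continuous `φ`.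
Since `f - f(0) = I^1 f' = I^α g`, for every `T ≥ 0`
`∫₀^T I^{1-α} f' = I^1 I^{1-α} f' = I^{1-α} I^1 f' = I^{1-α} I^α g = I^1 g = ∫₀^T g`,
and both integrands are continuous on `[0, ∞)`, so differentiating in `T` gives `I^{1-α} f' = g`.
-/

open MeasureTheory intervalIntegral Real Set

noncomputable def Y (ν t : ℝ) : ℝ := t ^ (ν - 1) / Real.Gamma ν

theorem integral_rpow_mul_one_sub_rpow {a b : ℝ} (ha : 0 < a) (hb : 0 < b) :
    ∫ x in (0:ℝ)..1, x ^ (a - 1) * (1 - x) ^ (b - 1) = Gamma a * Gamma b / Gamma (a + b) := by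
  have hbeta : Complex.betaIntegral a b = ↑(∫ x in (0:ℝ)..1, x ^ (a - 1) * (1 - x) ^ (b - 1)) := by
    rw [Complex.betaIntegral, ← intervalIntegral.integral_ofReal]
    refine integral_congr fun x hx => ?_
    rw [uIcc_of_le zero_le_one] at hx
    push_cast [Complex.ofReal_cpow hx.1, Complex.ofReal_cpow (sub_nonneg.2 hx.2)]
    rfl
  apply Complex.ofReal_injective
  rw [← hbeta, Complex.betaIntegral_eq_Gamma_mul_div _ _ (by simpa) (by simpa)]
  push_cast [← Complex.Gamma_ofReal]
  rfl

theorem Y_one (s : ℝ) : Y 1 s = 1 := by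
  simp [Y]

theorem Y_nonneg {ν s : ℝ} (hν : 0 < ν) (hs : 0 ≤ s) : 0 ≤ Y ν s :=
  div_nonneg (rpow_nonneg hs _) (Gamma_pos_of_pos hν).le

@[fun_prop]
theorem measurable_Y (ν : ℝ) : Measurable (Y ν) := by
  unfold Y; fun_prop

theorem intervalIntegrable_Y {ν : ℝ} (hν : 0 < ν) (a b : ℝ) : IntervalIntegrable (Y ν) volume a b :=
  (intervalIntegrable_rpow' (by linarith)).div_const _

theorem integral_Y {ν u : ℝ} (hν : 0 < ν) :
    ∫ s in (0:ℝ)..u, Y ν s = u ^ ν / Gamma (ν + 1) := by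
  simp only [Y, intervalIntegral.integral_div, integral_rpow (Or.inl (by linarith : -1 < ν - 1)),
    sub_add_cancel, zero_rpow hν.ne', sub_zero, Gamma_add_one hν.ne']
  field_simp

theorem integral_Y_mul_Y {a b v t : ℝ} (ha : 0 < a) (hb : 0 < b) (hvt : v < t) :
    ∫ u in v..t, Y a (t - u) * Y b (u - v) = Y (a + b) (t - v) := by
  set c := t - v with hc_def
  have hc : 0 < c := sub_pos.2 hvt
  have hscale : ∫ u in v..t, Y a (t - u) * Y b (u - v)
      = c * ∫ x in (0:ℝ)..1, Y a (t - (c * x + v)) * Y b (c * x + v - v) := by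
    rw [integral_comp_mul_add (fun u => Y a (t - u) * Y b (u - v)) hc.ne', smul_eq_mul,
      mul_inv_cancel_left₀ hc.ne', mul_zero, zero_add, mul_one, hc_def, sub_add_cancel]
  have hbeta : ∫ x in (0:ℝ)..1, Y a (t - (c * x + v)) * Y b (c * x + v - v)
      = c ^ (a - 1) * c ^ (b - 1) / (Gamma a * Gamma b) * (Gamma b * Gamma a / Gamma (b + a)) := by
    rw [← integral_rpow_mul_one_sub_rpow hb ha, ← intervalIntegral.integral_const_mul]
    refine integral_congr fun x hx => ?_
    rw [uIcc_of_le zero_le_one] at hx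
    rw [show t - (c * x + v) = c * (1 - x) by ring, add_sub_cancel_right, Y, Y,
      mul_rpow hc.le (sub_nonneg.2 hx.2), mul_rpow hc.le hx.1]
    ring
  have hpow : c ^ (a + b - 1) = c * (c ^ (a - 1) * c ^ (b - 1)) := by
    rw [← rpow_add hc, show a + b - 1 = 1 + ((a - 1) + (b - 1)) by ring, rpow_add hc, rpow_one]
  rw [hscale, hbeta, Y, hpow, add_comm b a]
  have := (Gamma_pos_of_pos ha).ne'
  have := (Gamma_pos_of_pos hb).ne'
  field_simp

theorem intervalIntegrable_Y_comp_sub {ν : ℝ} (hν : 0 < ν) (c a b : ℝ) :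
    IntervalIntegrable (fun x => Y ν (c - x)) volume a b := by
  simpa using (intervalIntegrable_Y hν (c - a) (c - b)).comp_sub_left c

theorem integral_Y_comp_sub {ν : ℝ} (hν : 0 < ν) (u : ℝ) :
    ∫ v in (0:ℝ)..u, Y ν (u - v) = u ^ ν / Gamma (ν + 1) := by
  simp [integral_comp_sub_left (Y ν) u, integral_Y hν]

def triangle (a t : ℝ) : Set (ℝ × ℝ) := {p | a < p.2 ∧ p.2 < p.1 ∧ p.1 ≤ t}

theorem measurableSet_triangle (a t : ℝ) : MeasurableSet (triangle a t) :=
  (measurableSet_lt measurable_const measurable_snd).inter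
    ((measurableSet_lt measurable_snd measurable_fst).inter
      (measurableSet_le measurable_fst measurable_const))

section

variable {E : Type*} [NormedAddCommGroup E]

theorem indicator_triangle_left (a t u v : ℝ) (F : ℝ × ℝ → E) :
    (triangle a t).indicator F (u, v)
      = (Ioc a t).indicator (fun u => (Ioo a u).indicator (fun v => F (u, v)) v) u := by
  simp only [indicator_apply, triangle, mem_ofPred_eq, mem_Ioc, mem_Ioo]
  split_ifs <;> first | rfl | (exfalso; grind)

theorem indicator_triangle_right (a t u v : ℝ) (F : ℝ × ℝ → E) :
    (triangle a t).indicator F (u, v)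
      = (Ioc a t).indicator (fun v => (Ioc v t).indicator (fun u => F (u, v)) u) v := by
  simp only [indicator_apply, triangle, mem_ofPred_eq, mem_Ioc]
  split_ifs <;> first | rfl | (exfalso; grind)

variable [NormedSpace ℝ E]

theorem integral_indicator_triangle_left (a t u : ℝ) (F : ℝ × ℝ → E) :
    ∫ v, (triangle a t).indicator F (u, v)
      = (Ioc a t).indicator (fun u => ∫ v in Ioo a u, F (u, v)) u := by
  simp_rw [indicator_triangle_left]
  by_cases hu : u ∈ Ioc a t <;> simp [hu, MeasureTheory.integral_indicator measurableSet_Ioo]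

theorem integral_indicator_triangle_right (a t v : ℝ) (F : ℝ × ℝ → E) :
    ∫ u, (triangle a t).indicator F (u, v)
      = (Ioc a t).indicator (fun v => ∫ u in Ioc v t, F (u, v)) v := by
  simp_rw [indicator_triangle_right]
  by_cases hv : v ∈ Ioc a t <;> simp [hv, MeasureTheory.integral_indicator measurableSet_Ioc]

theorem integral_integral_swap_triangle {F : ℝ → ℝ → E} {a t : ℝ} (hat : a ≤ t)
    (hF : IntegrableOn (Function.uncurry F) (triangle a t)) :
    ∫ u in a..t, ∫ v in a..u, F u v = ∫ v in a..t, ∫ u in v..t, F u v := by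
  have hG : Integrable ((triangle a t).indicator (Function.uncurry F)) (volume.prod volume) :=
    (integrable_indicator_iff (measurableSet_triangle a t)).2 hF
  have hswap := (integral_prod _ hG).symm.trans (integral_prod_symm _ hG)
  simp only [integral_indicator_triangle_left, integral_indicator_triangle_right,
    MeasureTheory.integral_indicator measurableSet_Ioc, Function.uncurry_apply_pair] at hswap
  rw [integral_of_le hat, integral_of_le hat]
  convert hswap using 1
  · refine setIntegral_congr_fun measurableSet_Ioc fun u hu => ?_
    rw [integral_of_le hu.1.le, integral_Ioc_eq_integral_Ioo]
  · exact setIntegral_congr_fun measurableSet_Ioc fun v hv => integral_of_le hv.2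

end

theorem integrableOn_triangle_Y_mul_Y {a b : ℝ} (ha : 0 < a) (hb : 0 < b) (t : ℝ) :
    IntegrableOn (fun p : ℝ × ℝ => Y a (t - p.1) * Y b (p.1 - p.2)) (triangle 0 t) := by
  set K := fun p : ℝ × ℝ => Y a (t - p.1) * Y b (p.1 - p.2)
  have hKm : Measurable K := by fun_prop
  rw [← integrable_indicator_iff (measurableSet_triangle 0 t), Measure.volume_eq_prod,
    integrable_prod_iff ((hKm.indicator (measurableSet_triangle 0 t)).aestronglyMeasurable)]
  constructor
  · refine Filter.Eventually.of_forall fun u => ?_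
    simp_rw [indicator_triangle_left]
    by_cases hu : u ∈ Ioc 0 t
    · simp only [indicator_of_mem hu]
      refine (integrable_indicator_iff measurableSet_Ioo).2 (IntegrableOn.mono_set ?_
        Ioo_subset_Ioc_self)
      exact ((intervalIntegrable_Y_comp_sub hb u 0 u).const_mul (Y a (t - u))).1
    · simp only [indicator_of_notMem hu]
      exact integrable_zero _ _ _
  · have hsection : ∀ u, ∫ v, ‖(triangle 0 t).indicator K (u, v)‖
        = (Ioc 0 t).indicator (fun u => Y a (t - u) * (u ^ b / Gamma (b + 1))) u := by
      intro u
      simp_rw [norm_indicator_eq_indicator_norm]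
      rw [integral_indicator_triangle_left 0 t u fun p => ‖K p‖]
      refine congrFun (indicator_congr fun u hu => ?_) u
      have hnorm : EqOn (fun v => ‖K (u, v)‖) (fun v => Y a (t - u) * Y b (u - v)) (Ioo 0 u) :=
        fun v hv => Real.norm_of_nonneg
          (mul_nonneg (Y_nonneg ha (sub_nonneg.2 hu.2)) (Y_nonneg hb (sub_nonneg.2 hv.2.le)))
      rw [setIntegral_congr_fun measurableSet_Ioo hnorm, MeasureTheory.integral_const_mul,
        ← integral_Ioc_eq_integral_Ioo, ← integral_of_le hu.1.le, integral_Y_comp_sub hb]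
    simp_rw [hsection]
    refine (integrable_indicator_iff measurableSet_Ioc).2 ?_
    exact ((intervalIntegrable_Y_comp_sub ha t 0 t).mul_continuousOn
      ((continuous_rpow_const hb.le).div_const _).continuousOn).1

theorem continuous_integral_mul_comp_mul {k φ : ℝ → ℝ} (hk : IntervalIntegrable k volume 0 1)
    (hφ : Continuous φ) : Continuous fun u => ∫ x in (0:ℝ)..1, k x * φ (u * x) := by
  refine continuous_iff_continuousAt.2 fun u₀ => ?_
  obtain ⟨C, hC⟩ := (isCompact_closedBall (0:ℝ) (‖u₀‖ + 1)).exists_bound_of_continuousOn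
    hφ.continuousOn
  refine continuousAt_of_dominated_interval (bound := fun x => ‖k x‖ * C) ?_ ?_
    (hk.norm.mul_const C) (Filter.Eventually.of_forall fun x _ => by fun_prop)
  · exact Filter.Eventually.of_forall fun u =>
      hk.def'.aestronglyMeasurable.mul
        (by fun_prop : Continuous fun x => φ (u * x)).aestronglyMeasurable
  · filter_upwards [Metric.ball_mem_nhds u₀ zero_lt_one] with u hu
    refine Filter.Eventually.of_forall fun x hx => ?_
    rw [uIoc_of_le zero_le_one] at hx
    have hux : u * x ∈ Metric.closedBall (0:ℝ) (‖u₀‖ + 1) := by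
      rw [mem_closedBall_zero_iff, norm_mul, Real.norm_of_nonneg hx.1.le]
      calc ‖u‖ * x ≤ ‖u‖ := mul_le_of_le_one_right (norm_nonneg u) hx.2
        _ ≤ ‖u₀‖ + 1 := norm_le_of_mem_closedBall (Metric.ball_subset_closedBall hu)
    rw [norm_mul]
    exact mul_le_mul_of_nonneg_left (hC _ hux) (norm_nonneg _)

/-- `fracIntegral ν φ t` is the convolution `(Y ν * φ)(t)`, the Riemann–Liouville integral of
order `ν`. -/
noncomputable def fracIntegral (ν : ℝ) (φ : ℝ → ℝ) (t : ℝ) : ℝ :=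
  ∫ s in (0:ℝ)..t, Y ν (t - s) * φ s

theorem fracIntegral_eq_integral_comp_sub (ν : ℝ) (φ : ℝ → ℝ) (t : ℝ) :
    fracIntegral ν φ t = ∫ s in (0:ℝ)..t, Y ν s * φ (t - s) := by
  have h := integral_comp_sub_left (a := 0) (b := t) (fun s => Y ν (t - s) * φ s) t
  simp only [sub_sub_cancel, sub_self, sub_zero] at h
  exact h.symm

theorem fracIntegral_one (φ : ℝ → ℝ) (t : ℝ) : fracIntegral 1 φ t = ∫ s in (0:ℝ)..t, φ s := by
  simp [fracIntegral, Y_one]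

theorem fracIntegral_congr {ν t : ℝ} {φ ψ : ℝ → ℝ} (h : EqOn φ ψ (uIcc 0 t)) :
    fracIntegral ν φ t = fracIntegral ν ψ t :=
  integral_congr fun s hs => by rw [h hs]

theorem fracIntegral_eq_rpow_mul_integral {c u : ℝ} (hc : 0 < c) (φ : ℝ → ℝ) (hu : 0 ≤ u) :
    fracIntegral c φ u = u ^ c / Gamma c * ∫ x in (0:ℝ)..1, (1 - x) ^ (c - 1) * φ (u * x) := by
  have hscale :=
    mul_integral_comp_mul_left (a := 0) (b := 1) (c := u) (f := fun v => Y c (u - v) * φ v)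
  rw [mul_zero, mul_one] at hscale
  have hpow : u ^ c = u ^ (c - 1) * u := by
    rw [← rpow_add_one' hu (by linarith), sub_add_cancel]
  have hinner : ∫ x in (0:ℝ)..1, Y c (u - u * x) * φ (u * x)
      = u ^ (c - 1) / Gamma c * ∫ x in (0:ℝ)..1, (1 - x) ^ (c - 1) * φ (u * x) := by
    rw [← intervalIntegral.integral_const_mul]
    refine integral_congr fun x hx => ?_
    rw [uIcc_of_le zero_le_one] at hx
    simp only [← mul_one_sub, Y, mul_rpow hu (sub_nonneg.2 hx.2)]
    ring
  rw [fracIntegral, ← hscale, hinner, hpow]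
  ring

theorem continuousOn_fracIntegral {c : ℝ} (hc : 0 < c) {φ : ℝ → ℝ} (hφ : Continuous φ) :
    ContinuousOn (fracIntegral c φ) (Ici 0) := by
  have hk : IntervalIntegrable (fun x : ℝ => (1 - x) ^ (c - 1)) volume 0 1 := by
    simpa using
      ((intervalIntegrable_rpow' (a := 0) (b := 1) (by linarith : -1 < c - 1)).comp_sub_left 1).symm
  refine ContinuousOn.congr
    (f := fun u => u ^ c / Gamma c * ∫ x in (0:ℝ)..1, (1 - x) ^ (c - 1) * φ (u * x)) ?_
    fun u hu => fracIntegral_eq_rpow_mul_integral hc φ hu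
  exact (((continuous_rpow_const hc.le).div_const _).mul
    (continuous_integral_mul_comp_mul hk hφ)).continuousOn

theorem integrableOn_triangle_Y_mul_Y_mul {a b : ℝ} (ha : 0 < a) (hb : 0 < b) {φ : ℝ → ℝ}
    (hφ : Continuous φ) (t : ℝ) :
    IntegrableOn (Function.uncurry fun u v => Y a (t - u) * (Y b (u - v) * φ v))
      (triangle 0 t) := by
  obtain ⟨M, hM⟩ := isCompact_Icc.exists_bound_of_continuousOn (s := Icc 0 t) hφ.continuousOn
  have hbound : ∀ᵐ p ∂(volume.restrict (triangle 0 t)), ‖φ p.2‖ ≤ M :=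
    ae_restrict_of_forall_mem (measurableSet_triangle 0 t) fun p hp =>
      hM _ ⟨hp.1.le, hp.2.1.le.trans hp.2.2⟩
  have h := (integrableOn_triangle_Y_mul_Y ha hb t).mul_bdd
    (hφ.comp continuous_snd).aestronglyMeasurable hbound
  simpa only [IntegrableOn, Function.uncurry_def, Function.comp_apply, mul_assoc] using h

theorem fracIntegral_fracIntegral {a b t : ℝ} (ha : 0 < a) (hb : 0 < b) {φ : ℝ → ℝ}
    (hφ : Continuous φ) (ht : 0 ≤ t) :
    fracIntegral a (fracIntegral b φ) t = fracIntegral (a + b) φ t := by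
  calc fracIntegral a (fracIntegral b φ) t
      = ∫ u in (0:ℝ)..t, ∫ v in (0:ℝ)..u, Y a (t - u) * (Y b (u - v) * φ v) := by
        simp only [fracIntegral, intervalIntegral.integral_const_mul]
    _ = ∫ v in (0:ℝ)..t, ∫ u in v..t, Y a (t - u) * (Y b (u - v) * φ v) :=
        integral_integral_swap_triangle ht (integrableOn_triangle_Y_mul_Y_mul ha hb hφ t)
    _ = fracIntegral (a + b) φ t := by
        -- only a.e.: at `v = t` the inner integral is `0`, but `Y (a + b) 0 = 1` when `a + b = 1`.
        refine integral_congr_ae ?_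
        filter_upwards [Measure.ae_ne volume t] with v hvt hv
        rw [uIoc_of_le ht] at hv
        simp only [← mul_assoc, intervalIntegral.integral_mul_const,
          integral_Y_mul_Y ha hb (lt_of_le_of_ne hv.2 hvt)]

theorem ContinuousOn.continuous_comp_max {X : Type*} [TopologicalSpace X] {φ : ℝ → X} {a : ℝ}
    (h : ContinuousOn φ (Ici a)) : Continuous fun x => φ (max x a) :=
  h.comp_continuous (continuous_id.max continuous_const) fun x => le_max_right x a

section

variable {E : Type*} [NormedAddCommGroup E] [NormedSpace ℝ E] [CompleteSpace E]
  {φ ψ : ℝ → E} {a : ℝ}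

theorem integral_eq_sub_of_hasDerivWithinAt_Ici {f : ℝ → E}
    (hf : ∀ t ∈ Ici a, HasDerivWithinAt f (φ t) (Ici a) t) (hφ : ContinuousOn φ (Ici a)) {u : ℝ}
    (hu : a ≤ u) : ∫ x in a..u, φ x = f u - f a :=
  integral_eq_sub_of_hasDeriv_right_of_le hu
    (fun x hx => (hf x hx.1).continuousWithinAt.mono Icc_subset_Ici_self)
    (fun x hx => (hf x hx.1.le).mono (Ioi_subset_Ici hx.1.le))
    (hφ.mono fun x hx => by rw [uIcc_of_le hu] at hx; exact hx.1).intervalIntegrable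

theorem hasDerivWithinAt_integral_Ici (hφ : ContinuousOn φ (Ici a)) {t : ℝ} (ht : a ≤ t) :
    HasDerivWithinAt (fun T => ∫ u in a..T, φ u) (φ t) (Ici t) t := by
  have hIoi : Ioi t ⊆ Ici a := fun x hx => ht.trans (le_of_lt hx)
  refine integral_hasDerivWithinAt_right ?_
    ((hφ.mono hIoi).stronglyMeasurableAtFilter_nhdsWithin measurableSet_Ioi t)
    ((hφ t ht).mono hIoi)
  exact (hφ.mono fun x hx => by rw [uIcc_of_le ht] at hx; exact hx.1).intervalIntegrable

theorem eqOn_Ici_of_forall_integral_eq (hφ : ContinuousOn φ (Ici a)) (hψ : ContinuousOn ψ (Ici a))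
    (h : ∀ T, a ≤ T → ∫ u in a..T, φ u = ∫ u in a..T, ψ u) : EqOn φ ψ (Ici a) := fun t ht =>
  (uniqueDiffOn_Ici t t self_mem_Ici).eq_deriv _ (hasDerivWithinAt_integral_Ici hφ ht)
    ((hasDerivWithinAt_integral_Ici hψ ht).congr (fun T hT => h T (ht.trans hT)) (h t ht))

end

theorem eqOn_fracIntegral_one_sub_of_fracIntegral_one_eq {α : ℝ} (hα : 0 < α) (hα1 : α < 1)
    {φ ψ : ℝ → ℝ} (hφ : Continuous φ) (hψ : Continuous ψ)
    (h : ∀ u, 0 ≤ u → fracIntegral 1 φ u = fracIntegral α ψ u) :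
    EqOn (fracIntegral (1 - α) φ) ψ (Ici 0) := by
  have hc : 0 < 1 - α := sub_pos.2 hα1
  refine eqOn_Ici_of_forall_integral_eq (continuousOn_fracIntegral hc hφ) hψ.continuousOn
    fun T hT => ?_
  calc ∫ u in (0:ℝ)..T, fracIntegral (1 - α) φ u
      = fracIntegral 1 (fracIntegral (1 - α) φ) T := (fracIntegral_one _ _).symm
    _ = fracIntegral (1 - α) (fracIntegral 1 φ) T := by
      rw [fracIntegral_fracIntegral one_pos hc hφ hT, fracIntegral_fracIntegral hc one_pos hφ hT,
        add_comm]
    _ = fracIntegral (1 - α) (fracIntegral α ψ) T :=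
      fracIntegral_congr fun u hu => h u (uIcc_of_le hT ▸ hu).1
    _ = ∫ u in (0:ℝ)..T, ψ u := by
      rw [fracIntegral_fracIntegral hc hα hψ hT, sub_add_cancel, fracIntegral_one]

theorem caputo_from_integral (α : ℝ) (hα : 0 < α) (hα1 : α < 1)
    (f f' g : ℝ → ℝ)
    (hf : ∀ t ∈ Ici (0:ℝ), HasDerivWithinAt f (f' t) (Ici 0) t)
    (hf' : ContinuousOn f' (Ici 0))
    (hg : ContinuousOn g (Ici 0))
    (h : ∀ t : ℝ, 0 ≤ t → f t - f 0 = ∫ s in (0:ℝ)..t, Y α s * g (t - s)) :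
    ∀ t : ℝ, 0 ≤ t → (∫ s in (0:ℝ)..t, Y (1 - α) s * f' (t - s)) = g t := by
  intro t ht
  have hIcc : ∀ {u : ℝ}, 0 ≤ u → uIcc 0 u ⊆ Ici 0 := fun hu x hx => (uIcc_of_le hu ▸ hx).1
  set F' := fun x => f' (max x 0)
  set G := fun x => g (max x 0)
  have hF' : EqOn F' f' (Ici 0) := fun x hx => congrArg f' (max_eq_left hx)
  have hG : EqOn G g (Ici 0) := fun x hx => congrArg g (max_eq_left hx)
  have hFG : ∀ u, 0 ≤ u → fracIntegral 1 F' u = fracIntegral α G u := fun u hu => by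
    rw [fracIntegral_one, integral_congr (hF'.mono (hIcc hu)),
      integral_eq_sub_of_hasDerivWithinAt_Ici hf hf' hu, h u hu,
      ← fracIntegral_eq_integral_comp_sub, fracIntegral_congr (hG.mono (hIcc hu))]
  rw [← fracIntegral_eq_integral_comp_sub, ← fracIntegral_congr (hF'.mono (hIcc ht)), ← hG ht]
  exact eqOn_fracIntegral_one_sub_of_fracIntegral_one_eq hα hα1 hf'.continuous_comp_max
    hg.continuous_comp_max hFG ht
end

section
/- Let β : [0,∞) → [0,∞) be continuous and bounded with ∫₀^∞ β = +∞, ψ(t) = e^{−∫₀^t β(s)ds}, φ = βψ. Let n⁰ ∈ L¹(0,∞), n⁰ ≥ 0, and let N : [0,∞) → ℝ be a continuous nonnegative function satisfying the renewal equation N(t) = (φ * N)(t) + ∫₀^∞ (φ(a+t)/ψ(a)) n⁰(a) da. Then (ψ * N)(t) = ∫₀^∞ n⁰(a) da − ∫₀^∞ (ψ(a+t)/ψ(a)) n⁰(a) da for all t ≥ 0, and consequently (ψ * N)(t) → ∫₀^∞ n⁰(a) da as t → ∞. -/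
/-!
Write `ψ = exp (-B)` with `B x = ∫₀ˣ β`, so that `ψ' = -φ` and `∫₀ˣ φ = 1 - ψ x`. Integrating the
renewal equation over `[0, t]` and exchanging the order of integration over the triangle
`0 ≤ s ≤ v ≤ t` turns `∫₀ᵗ (φ ⋆ N)` into `((1 - ψ) ⋆ N) t = ∫₀ᵗ N - (ψ ⋆ N) t`, so `(ψ ⋆ N) t`
is the integral over `[0, t]` of the initial-data term. Exchanging the order of integration once
more, that integral is `∫ n⁰ - ∫ ψ(a + t) / ψ(a) n⁰(a) da`. Finally `∫ β = ∞` forces `ψ → 0`, so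
the ratio `ψ(a + t) / ψ(a) ∈ (0, 1]` tends to `0` and dominated convergence gives the limit.
-/

open MeasureTheory intervalIntegral Real Set Filter

noncomputable def causalConv (f g : ℝ → ℝ) (t : ℝ) : ℝ :=
  ∫ s in (0:ℝ)..t, f s * g (t - s)

section causalConv

variable {f g : ℝ → ℝ}

theorem causalConv_comm (f g : ℝ → ℝ) (t : ℝ) : causalConv f g t = causalConv g f t := by
  have h := integral_comp_sub_left (a := 0) (b := t) (fun s => g s * f (t - s)) t
  simp only [sub_sub_cancel, sub_zero, sub_self] at h
  simp only [causalConv, ← h, mul_comm]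

theorem continuous_causalConv (hf : Continuous f) (hg : Continuous g) :
    Continuous (causalConv f g) :=
  continuous_parametric_intervalIntegral_of_continuous (by fun_prop) continuous_id

theorem causalConv_add_causalConv_one_sub (hf : Continuous f) (hg : Continuous g) (t : ℝ) :
    causalConv f g t + causalConv (fun s => 1 - f s) g t = ∫ s in (0:ℝ)..t, g s := by
  have hint : ∀ h : ℝ → ℝ, Continuous h →
      IntervalIntegrable (fun s => h s * g (t - s)) volume 0 t :=
    fun h hh => (by fun_prop : Continuous fun s => h s * g (t - s)).intervalIntegrable _ _
  rw [causalConv, causalConv, ← intervalIntegral.integral_add (hint f hf) (hint _ (by fun_prop))]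
  simp only [← add_mul, add_sub_cancel, one_mul, integral_comp_sub_left, sub_self, sub_zero]

theorem integral_causalConv_eq_causalConv_primitive_right (hf : Continuous f) (hg : Continuous g)
    {t : ℝ} (ht : 0 ≤ t) :
    ∫ v in (0:ℝ)..t, causalConv f g v = causalConv f (fun x => ∫ s in (0:ℝ)..x, g s) t := by
  set μ := volume.restrict (Ioc (0:ℝ) t)
  set K : ℝ × ℝ → ℝ := {p | p.1 ≤ p.2}.indicator fun p => f p.1 * g (p.2 - p.1)
  have hK : Integrable K (μ.prod μ) := by
    refine Integrable.indicator ?_ (measurableSet_le measurable_fst measurable_snd)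
    rw [Measure.prod_restrict, ← Measure.volume_eq_prod]
    exact ((by fun_prop : Continuous fun p : ℝ × ℝ => f p.1 * g (p.2 - p.1)).continuousOn
      |>.integrableOn_compact (isCompact_Icc.prod isCompact_Icc)).mono_set
      (prod_mono Ioc_subset_Icc_self Ioc_subset_Icc_self)
  have hv : ∀ v ∈ Ioc (0:ℝ) t, ∫ s, K (s, v) ∂μ = causalConv f g v := by
    intro v hv
    have hKv : (fun s => K (s, v)) = (Iic v).indicator fun s => f s * g (v - s) := by
      ext s; simp only [K, indicator, mem_ofPred_eq, mem_Iic]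
    rw [hKv, setIntegral_indicator measurableSet_Iic, Ioc_inter_Iic, min_eq_right hv.2,
      ← integral_of_le hv.1.le, causalConv]
  have hs : ∀ s ∈ Ioc (0:ℝ) t, ∫ v, K (s, v) ∂μ = f s * ∫ x in (0:ℝ)..t - s, g x := by
    intro s hs
    have hKs : (fun v => K (s, v)) = (Ici s).indicator fun v => f s * g (v - s) := by
      ext v; simp only [K, indicator, mem_ofPred_eq, mem_Ici]
    have hIcc : Ioc 0 t ∩ Ici s = Icc s t := by
      ext v; simp only [mem_inter_iff, mem_Ioc, mem_Ici, mem_Icc]; grind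
    rw [hKs, setIntegral_indicator measurableSet_Ici, hIcc, integral_Icc_eq_integral_Ioc,
      ← integral_of_le hs.2, intervalIntegral.integral_const_mul, integral_comp_sub_right,
      sub_self]
  rw [integral_of_le ht, causalConv, integral_of_le ht,
    ← setIntegral_congr_fun measurableSet_Ioc hv, ← setIntegral_congr_fun measurableSet_Ioc hs]
  exact (integral_integral_swap (f := fun s v => K (s, v)) hK).symm

theorem integral_causalConv_eq_causalConv_primitive_left (hf : Continuous f) (hg : Continuous g)
    {t : ℝ} (ht : 0 ≤ t) :
    ∫ v in (0:ℝ)..t, causalConv f g v = causalConv (fun x => ∫ s in (0:ℝ)..x, f s) g t := by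
  simp only [causalConv_comm f g]
  rw [integral_causalConv_eq_causalConv_primitive_right hg hf ht, causalConv_comm]

end causalConv

theorem intervalIntegral_integral_mul_swap {μ : Measure ℝ} [SFinite μ] {k : ℝ → ℝ → ℝ}
    {n : ℝ → ℝ} {t C : ℝ} (ht : 0 ≤ t) (hk : Continuous (Function.uncurry k))
    (hkC : ∀ a, ∀ v ∈ Ioc 0 t, |k a v| ≤ C) (hn : Integrable n μ) :
    ∫ v in (0:ℝ)..t, ∫ a, k a v * n a ∂μ = ∫ a, (∫ v in (0:ℝ)..t, k a v) * n a ∂μ := by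
  have hint : Integrable (fun p : ℝ × ℝ => k p.2 p.1 * n p.2)
      ((volume.restrict (Ioc 0 t)).prod μ) := by
    refine Integrable.mono' ((integrable_const C).mul_prod hn.norm)
      ((hk.comp continuous_swap).aestronglyMeasurable.mul hn.1.comp_snd)
      (Measure.quasiMeasurePreserving_fst.ae (ae_restrict_mem measurableSet_Ioc) |>.mono
        fun p hp => ?_)
    rw [norm_mul, Real.norm_eq_abs]
    exact mul_le_mul_of_nonneg_right (hkC _ _ hp) (norm_nonneg _)
  simp only [integral_of_le ht, ← MeasureTheory.integral_mul_const]
  exact integral_integral_swap (f := fun v a => k a v * n a) hint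

theorem tendsto_intervalIntegral_atTop_of_lintegral_eq_top {β : ℝ → ℝ} (hβ : Continuous β)
    (hβ0 : ∀ a, 0 ≤ β a) (hβinf : ∫⁻ a in Ioi (0:ℝ), ENNReal.ofReal (β a) = ⊤) :
    Tendsto (fun t => ∫ s in (0:ℝ)..t, β s) atTop atTop := by
  refine tendsto_atTop_atTop_of_monotone
    (monotone_of_hasDerivAt_nonneg (fun t => (hβ.integral_hasStrictDerivAt 0 t).hasDerivAt) hβ0)
    fun M => ?_
  by_contra! hM
  have hint : IntegrableOn β (Ioi 0) :=
    integrableOn_Ioi_of_intervalIntegral_norm_bounded M 0 (fun _ => hβ.integrableOn_Ioc)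
      tendsto_id (Eventually.of_forall fun t => by
        simpa only [id, norm_of_nonneg (hβ0 _)] using (hM t).le)
  exact ((hasFiniteIntegral_iff_ofReal (ae_of_all _ hβ0)).1 hint.2).ne hβinf

noncomputable def survival (β : ℝ → ℝ) (t : ℝ) : ℝ :=
  exp (-∫ s in (0:ℝ)..t, β s)

section survival

variable {β : ℝ → ℝ}

theorem survival_pos (β : ℝ → ℝ) (t : ℝ) : 0 < survival β t := exp_pos _

theorem survival_zero (β : ℝ → ℝ) : survival β 0 = 1 := by simp [survival]

theorem hasDerivAt_survival (hβ : Continuous β) (t : ℝ) :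
    HasDerivAt (survival β) (-(β t * survival β t)) t :=
  (hβ.integral_hasStrictDerivAt 0 t).hasDerivAt.neg.exp.congr_deriv <| by
    rw [mul_neg, mul_comm]; rfl

theorem continuous_survival (hβ : Continuous β) : Continuous (survival β) :=
  continuous_iff_continuousAt.2 fun t => (hasDerivAt_survival hβ t).continuousAt

theorem antitone_survival (hβ : Continuous β) (hβ0 : ∀ a, 0 ≤ β a) : Antitone (survival β) :=
  antitone_of_hasDerivAt_nonpos (hasDerivAt_survival hβ) fun t =>
    neg_nonpos.2 (mul_nonneg (hβ0 t) (survival_pos β t).le)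

theorem integral_mul_survival (hβ : Continuous β) (a b : ℝ) :
    ∫ x in a..b, β x * survival β x = survival β a - survival β b := by
  rw [integral_eq_sub_of_hasDerivAt (f := fun x => -survival β x)
    (fun x _ => (hasDerivAt_survival hβ x).neg.congr_deriv (neg_neg _))
    ((hβ.mul (continuous_survival hβ)).intervalIntegrable a b)]
  ring

theorem tendsto_survival_atTop (hβ : Continuous β) (hβ0 : ∀ a, 0 ≤ β a)
    (hβinf : ∫⁻ a in Ioi (0:ℝ), ENNReal.ofReal (β a) = ⊤) :
    Tendsto (survival β) atTop (nhds 0) :=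
  tendsto_exp_atBot.comp (tendsto_neg_atTop_atBot.comp
    (tendsto_intervalIntegral_atTop_of_lintegral_eq_top hβ hβ0 hβinf))

theorem survival_add_div_le_one (hβ : Continuous β) (hβ0 : ∀ a, 0 ≤ β a) (a : ℝ) {t : ℝ}
    (ht : 0 ≤ t) : survival β (a + t) / survival β a ≤ 1 :=
  (div_le_one (survival_pos β a)).2 (antitone_survival hβ hβ0 (le_add_of_nonneg_right ht))

theorem integral_mul_survival_add_div (hβ : Continuous β) (a t : ℝ) :
    ∫ v in (0:ℝ)..t, β (a + v) * survival β (a + v) / survival β a =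
      1 - survival β (a + t) / survival β a := by
  rw [intervalIntegral.integral_div, integral_comp_add_left (fun x => β x * survival β x),
    add_zero, integral_mul_survival hβ, sub_div, div_self (survival_pos β a).ne']

theorem abs_mul_survival_add_div_le (hβ : Continuous β) (hβ0 : ∀ a, 0 ≤ β a) {C : ℝ}
    (hC : ∀ a, β a ≤ C) (a : ℝ) {t : ℝ} (ht : 0 ≤ t) :
    |β (a + t) * survival β (a + t) / survival β a| ≤ C := by
  have hratio := (div_pos (survival_pos β (a + t)) (survival_pos β a)).le
  rw [mul_div_assoc, abs_of_nonneg (mul_nonneg (hβ0 _) hratio)]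
  calc β (a + t) * (survival β (a + t) / survival β a)
      ≤ C * 1 := mul_le_mul (hC _) (survival_add_div_le_one hβ hβ0 a ht) hratio
        ((hβ0 0).trans (hC 0))
    _ = C := mul_one C

theorem norm_survival_add_div_mul_le (hβ : Continuous β) (hβ0 : ∀ a, 0 ≤ β a) (a : ℝ) {t : ℝ}
    (ht : 0 ≤ t) (x : ℝ) : ‖survival β (a + t) / survival β a * x‖ ≤ ‖x‖ := by
  rw [norm_mul, Real.norm_of_nonneg (div_pos (survival_pos β _) (survival_pos β a)).le]
  exact mul_le_of_le_one_left (norm_nonneg _) (survival_add_div_le_one hβ hβ0 a ht)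

variable {μ : Measure ℝ} {n : ℝ → ℝ}

theorem integrable_survival_add_div_mul (hβ : Continuous β) (hβ0 : ∀ a, 0 ≤ β a)
    (hn : Integrable n μ) {t : ℝ} (ht : 0 ≤ t) :
    Integrable (fun a => survival β (a + t) / survival β a * n a) μ :=
  hn.norm.mono' (((continuous_survival hβ).comp (continuous_add_const t)).div
    (continuous_survival hβ) (fun a => (survival_pos β a).ne') |>.aestronglyMeasurable.mul hn.1)
    (ae_of_all _ fun a => norm_survival_add_div_mul_le hβ hβ0 a ht (n a))

theorem tendsto_integral_survival_add_div_mul (hβ : Continuous β) (hβ0 : ∀ a, 0 ≤ β a)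
    (hβinf : ∫⁻ a in Ioi (0:ℝ), ENNReal.ofReal (β a) = ⊤) (hn : Integrable n μ) :
    Tendsto (fun t => ∫ a, survival β (a + t) / survival β a * n a ∂μ) atTop (nhds 0) := by
  have hlim : ∀ a, Tendsto (fun t => survival β (a + t) / survival β a * n a) atTop
      (nhds 0) := fun a => by
    simpa using ((tendsto_survival_atTop hβ hβ0 hβinf).comp
      (tendsto_atTop_add_const_left _ a tendsto_id)).div_const (survival β a) |>.mul_const (n a)
  simpa using tendsto_integral_filter_of_dominated_convergence (fun a => ‖n a‖)
    ((eventually_ge_atTop 0).mono fun t ht => (integrable_survival_add_div_mul hβ hβ0 hn ht).1)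
    ((eventually_ge_atTop 0).mono fun t ht =>
      ae_of_all _ fun a => norm_survival_add_div_mul_le hβ hβ0 a ht _)
    hn.norm (ae_of_all _ hlim)

theorem intervalIntegral_integral_mul_survival_add_div [SFinite μ] (hβ : Continuous β)
    (hβ0 : ∀ a, 0 ≤ β a) {C : ℝ} (hC : ∀ a, β a ≤ C) (hn : Integrable n μ) {t : ℝ}
    (ht : 0 ≤ t) :
    ∫ v in (0:ℝ)..t, ∫ a, β (a + v) * survival β (a + v) / survival β a * n a ∂μ =
      ∫ a, n a ∂μ - ∫ a, survival β (a + t) / survival β a * n a ∂μ := by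
  have hφ : Continuous fun x => β x * survival β x := hβ.mul (continuous_survival hβ)
  rw [intervalIntegral_integral_mul_swap (k := fun a v => β (a + v) * survival β (a + v) /
      survival β a) ht
    ((hφ.comp continuous_add).div ((continuous_survival hβ).comp continuous_fst)
      fun p => (survival_pos β _).ne')
    (fun a v hv => abs_mul_survival_add_div_le hβ hβ0 hC a hv.1.le) hn,
    ← integral_sub hn (integrable_survival_add_div_mul hβ hβ0 hn ht)]
  simp only [integral_mul_survival_add_div hβ, sub_mul, one_mul]

theorem causalConv_survival_eq_integral_of_renewal (hβ : Continuous β) {N R : ℝ → ℝ}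
    (hN : Continuous N)
    (hren : ∀ v, 0 ≤ v → N v = causalConv (fun s => β s * survival β s) N v + R v) {t : ℝ}
    (ht : 0 ≤ t) : causalConv (survival β) N t = ∫ v in (0:ℝ)..t, R v := by
  have hφ : Continuous fun x => β x * survival β x := hβ.mul (continuous_survival hβ)
  have hsplit := causalConv_add_causalConv_one_sub (continuous_survival hβ) hN t
  have hprimitive : causalConv (fun s => 1 - survival β s) N t =
      ∫ v in (0:ℝ)..t, causalConv (fun s => β s * survival β s) N v := by
    rw [integral_causalConv_eq_causalConv_primitive_left hφ hN ht]
    simp only [integral_mul_survival hβ, survival_zero]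
  have hintegrated : ∫ v in (0:ℝ)..t, R v =
      (∫ v in (0:ℝ)..t, N v) - ∫ v in (0:ℝ)..t, causalConv (fun s => β s * survival β s) N v := by
    rw [← intervalIntegral.integral_sub (hN.intervalIntegrable _ _)
      ((continuous_causalConv hφ hN).intervalIntegrable _ _)]
    refine integral_congr fun v hv => ?_
    linarith [hren v (uIcc_of_le ht ▸ hv).1]
  linarith

end survival

theorem renewal_convolution_limit_general (β : ℝ → ℝ)
    (hβc : Continuous β) (hβ0 : ∀ a, 0 ≤ β a) (hβb : ∃ C, ∀ a, β a ≤ C)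
    (hβinf : ∫⁻ a in Ioi (0:ℝ), ENNReal.ofReal (β a) = ⊤)
    (ψ φ : ℝ → ℝ) (hψ : ∀ t, ψ t = Real.exp (-∫ s in (0:ℝ)..t, β s))
    (hφ : ∀ t, φ t = β t * ψ t)
    (n0 : ℝ → ℝ) (hn0i : IntegrableOn n0 (Ioi 0))
    (N : ℝ → ℝ) (hNc : Continuous N)
    (hren : ∀ t : ℝ, 0 ≤ t →
      N t = (∫ s in (0:ℝ)..t, φ s * N (t - s)) +
        ∫ a in Ioi (0:ℝ), (φ (a + t) / ψ a) * n0 a) :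
    (∀ t : ℝ, 0 ≤ t →
      (∫ s in (0:ℝ)..t, ψ s * N (t - s)) =
        (∫ a in Ioi (0:ℝ), n0 a) - ∫ a in Ioi (0:ℝ), (ψ (a + t) / ψ a) * n0 a) ∧
    Tendsto (fun t => ∫ s in (0:ℝ)..t, ψ s * N (t - s)) atTop
      (nhds (∫ a in Ioi (0:ℝ), n0 a)) := by
  obtain ⟨C, hC⟩ := hβb
  obtain rfl : ψ = survival β := funext hψ
  obtain rfl : φ = fun t => β t * survival β t := funext hφ
  have key : ∀ t, 0 ≤ t → causalConv (survival β) N t = (∫ a in Ioi (0:ℝ), n0 a) -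
      ∫ a in Ioi (0:ℝ), survival β (a + t) / survival β a * n0 a := fun t ht =>
    (causalConv_survival_eq_integral_of_renewal hβc hNc hren ht).trans
      (intervalIntegral_integral_mul_survival_add_div hβc hβ0 hC hn0i ht)
  refine ⟨key, ?_⟩
  have hlim := (tendsto_const_nhds (x := ∫ a in Ioi (0:ℝ), n0 a)).sub
    (tendsto_integral_survival_add_div_mul hβc hβ0 hβinf hn0i)
  rw [sub_zero] at hlim
  exact hlim.congr' ((eventually_ge_atTop 0).mono fun t ht => (key t ht).symm)

theorem renewal_convolution_limit (β : ℝ → ℝ)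
    (hβc : Continuous β) (hβ0 : ∀ a, 0 ≤ β a) (hβb : ∃ C, ∀ a, β a ≤ C)
    (hβinf : ∫⁻ a in Ioi (0:ℝ), ENNReal.ofReal (β a) = ⊤)
    (ψ φ : ℝ → ℝ) (hψ : ∀ t, ψ t = Real.exp (-∫ s in (0:ℝ)..t, β s))
    (hφ : ∀ t, φ t = β t * ψ t)
    (n0 : ℝ → ℝ) (hn0 : ∀ a, 0 ≤ n0 a) (hn0i : IntegrableOn n0 (Ioi 0))
    (N : ℝ → ℝ) (hNc : Continuous N) (hN0 : ∀ t, 0 ≤ N t)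
    (hren : ∀ t : ℝ, 0 ≤ t →
      N t = (∫ s in (0:ℝ)..t, φ s * N (t - s)) +
        ∫ a in Ioi (0:ℝ), (φ (a + t) / ψ a) * n0 a) :
    (∀ t : ℝ, 0 ≤ t →
      (∫ s in (0:ℝ)..t, ψ s * N (t - s)) =
        (∫ a in Ioi (0:ℝ), n0 a) - ∫ a in Ioi (0:ℝ), (ψ (a + t) / ψ a) * n0 a) ∧
    Tendsto (fun t => ∫ s in (0:ℝ)..t, ψ s * N (t - s)) atTop
      (nhds (∫ a in Ioi (0:ℝ), n0 a)) :=
  renewal_convolution_limit_general β hβc hβ0 hβb hβinf ψ φ hψ hφ n0 hn0i N hNc hren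
end

section
/- Suppose ψ : [0,∞) → (0,1] is non-increasing with ψ(t) = Ψ t^{−α} + O(t^{−α−δ}) as t → ∞, for constants Ψ > 0, α ∈ (0,1), δ ∈ (0,1−α). Let n⁰ ≥ 0 with ∫₀^∞ n⁰(a)(1+a)^α da ≤ M. Then there exists a constant C (depending only on ψ) such that for all t ≥ 0, ∫₀^∞ (ψ(a+t)/ψ(a)) n⁰(a) da ≤ C M 2^α (1+t)^{−α}. -/
/-! The asymptotics make `ψ(s) (1 + s)^α` tend to `Ψ > 0`; together with monotonicity and
positivity on compact pieces this gives `m (1 + s)^(-α) ≤ ψ s ≤ M (1 + s)^(-α)` on `[0, ∞)`.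
Hence `ψ(a + t) / ψ(a) ≤ (M / m) (1 + a)^α (1 + t)^(-α)`, and integrating against `n⁰`
bounds the tail by `(M / m) (1 + t)^(-α) ∫ n⁰(a) (1 + a)^α da`. -/

open MeasureTheory Real Set Filter Topology

lemma tendsto_mul_rpow_of_abs_sub_le {ψ : ℝ → ℝ} {Ψ α δ C₀ K : ℝ} (hδ : 0 < δ)
    (h : ∀ t, K ≤ t → |ψ t - Ψ * t ^ (-α)| ≤ C₀ * t ^ (-α - δ)) :
    Tendsto (fun t => ψ t * t ^ α) atTop (𝓝 Ψ) := by
  rw [← tendsto_sub_nhds_zero_iff]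
  have hdecay : Tendsto (fun t : ℝ => C₀ * t ^ (-δ)) atTop (𝓝 0) := by
    simpa using (tendsto_rpow_neg_atTop hδ).const_mul C₀
  refine squeeze_zero_norm' ?_ hdecay
  filter_upwards [eventually_ge_atTop K, eventually_gt_atTop 0] with t htK ht
  have hcancel : t ^ (-α) * t ^ α = 1 := by rw [← rpow_add ht]; simp
  have hfactor : ψ t * t ^ α - Ψ = (ψ t - Ψ * t ^ (-α)) * t ^ α := by
    linear_combination Ψ * hcancel
  calc ‖ψ t * t ^ α - Ψ‖ = |ψ t - Ψ * t ^ (-α)| * t ^ α := by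
        rw [hfactor, Real.norm_eq_abs, abs_mul, abs_of_pos (rpow_pos_of_pos ht α)]
    _ ≤ C₀ * t ^ (-α - δ) * t ^ α := by gcongr; exact h t htK
    _ = C₀ * t ^ (-δ) := by rw [mul_assoc, ← rpow_add ht]; ring_nf

lemma tendsto_mul_one_add_rpow_of_tendsto_mul_rpow {f : ℝ → ℝ} {L α : ℝ}
    (h : Tendsto (fun t => f t * t ^ α) atTop (𝓝 L)) :
    Tendsto (fun t => f t * (1 + t) ^ α) atTop (𝓝 L) := by
  have hfactor : Tendsto (fun t : ℝ => (1 + t⁻¹) ^ α) atTop (𝓝 1) := by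
    simpa using (tendsto_inv_atTop_zero.const_add 1).rpow_const (p := α) (Or.inl (by norm_num))
  have hprod : Tendsto (fun t => f t * t ^ α * (1 + t⁻¹) ^ α) atTop (𝓝 L) := by
    simpa using h.mul hfactor
  refine hprod.congr' ?_
  filter_upwards [eventually_gt_atTop 0] with t ht
  rw [mul_assoc, ← mul_rpow ht.le (by positivity), mul_add, mul_inv_cancel₀ ht.ne', mul_one,
    add_comm]

section

variable {ψ : ℝ → ℝ} {Ψ α : ℝ}

lemma exists_rpow_bounds_of_tendsto (hΨ : 0 < Ψ) (hα : 0 ≤ α)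
    (hψpos : ∀ t, 0 ≤ t → 0 < ψ t ∧ ψ t ≤ 1)
    (hψmono : ∀ s t : ℝ, 0 ≤ s → s ≤ t → ψ t ≤ ψ s)
    (hlim : Tendsto (fun t => ψ t * (1 + t) ^ α) atTop (𝓝 Ψ)) :
    ∃ m M : ℝ, 0 < m ∧ ∀ s, 0 ≤ s →
      m * (1 + s) ^ (-α) ≤ ψ s ∧ ψ s ≤ M * (1 + s) ^ (-α) := by
  obtain ⟨K, hK⟩ := eventually_atTop.1
    (hlim.eventually (Ioo_mem_nhds (half_lt_self hΨ) (lt_two_mul_self hΨ)))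
  set K' := max K 0
  have hK' : 0 ≤ K' := le_max_right _ _
  refine ⟨min (Ψ / 2) (ψ K'), max (2 * Ψ) ((1 + K') ^ α),
    lt_min (half_pos hΨ) (hψpos K' hK').1, fun s hs => ?_⟩
  have hs1 : 0 < 1 + s := by linarith
  have hsplit : ψ s = ψ s * (1 + s) ^ α * (1 + s) ^ (-α) := by
    rw [mul_assoc, ← rpow_add hs1]; simp
  rcases le_or_gt K' s with hKs | hsK
  · obtain ⟨hlow, hhigh⟩ := hK s (le_trans (le_max_left _ _) hKs)
    constructor <;> rw [hsplit] <;> gcongr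
    · exact (min_le_left _ _).trans hlow.le
    · exact hhigh.le.trans (le_max_left _ _)
  · constructor
    · calc min (Ψ / 2) (ψ K') * (1 + s) ^ (-α) ≤ ψ K' * 1 := by
            gcongr
            · exact (hψpos K' hK').1.le
            · exact min_le_right _ _
            · exact rpow_le_one_of_one_le_of_nonpos (by linarith) (by linarith)
        _ ≤ ψ s := by rw [mul_one]; exact hψmono s K' hs hsK.le
    · calc ψ s ≤ (1 + K') ^ α * (1 + K') ^ (-α) := by
            rw [← rpow_add (by linarith)]; simpa using (hψpos s hs).2
        _ ≤ max (2 * Ψ) ((1 + K') ^ α) * (1 + s) ^ (-α) := by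
            refine mul_le_mul (le_max_right _ _) ?_ (by positivity) (by positivity)
            exact rpow_le_rpow_of_nonpos hs1 (by linarith) (by linarith)

lemma exists_ratio_le_of_rpow_bounds (hα : 0 ≤ α) (hψpos : ∀ t, 0 ≤ t → 0 < ψ t)
    (hbounds : ∃ m M : ℝ, 0 < m ∧ ∀ s, 0 ≤ s →
      m * (1 + s) ^ (-α) ≤ ψ s ∧ ψ s ≤ M * (1 + s) ^ (-α)) :
    ∃ C : ℝ, 0 < C ∧ ∀ a t : ℝ, 0 ≤ a → 0 ≤ t →
      ψ (a + t) / ψ a ≤ C * (1 + a) ^ α * (1 + t) ^ (-α) := by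
  obtain ⟨m, M, hm, hb⟩ := hbounds
  have hM : 0 < M := by simpa using (hψpos 0 le_rfl).trans_le (hb 0 le_rfl).2
  refine ⟨M / m, by positivity, fun a t ha ht => ?_⟩
  have ha1 : 0 < 1 + a := by linarith
  rw [div_le_iff₀ (hψpos a ha)]
  calc ψ (a + t) ≤ M * (1 + (a + t)) ^ (-α) := (hb _ (by linarith)).2
    _ ≤ M * (1 + t) ^ (-α) :=
        mul_le_mul_of_nonneg_left (rpow_le_rpow_of_nonpos (by linarith) (by linarith)
          (by linarith)) hM.le
    _ = M / m * (1 + a) ^ α * (1 + t) ^ (-α) * (m * (1 + a) ^ (-α)) := by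
        field_simp
        rw [← rpow_add ha1]
        simp
    _ ≤ M / m * (1 + a) ^ α * (1 + t) ^ (-α) * ψ a := by
        gcongr
        exact (hb a ha).1

end

lemma setIntegral_le_const_mul_of_le {X : Type*} [MeasurableSpace X] {μ : Measure X}
    {f g : X → ℝ} {s : Set X} {c : ℝ} (hs : MeasurableSet s) (hf : ∀ x ∈ s, 0 ≤ f x)
    (hfg : ∀ x ∈ s, f x ≤ c * g x) (hg : IntegrableOn g s μ) :
    ∫ x in s, f x ∂μ ≤ c * ∫ x in s, g x ∂μ := by
  rw [← integral_const_mul]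
  exact integral_mono_of_nonneg (ae_restrict_of_forall_mem hs hf) (hg.const_mul c)
    (ae_restrict_of_forall_mem hs hfg)

theorem quantified_renewal_tail_general (ψ : ℝ → ℝ) (Ψ α δ M : ℝ)
    (hΨ : 0 < Ψ) (hα : 0 < α) (hδ : 0 < δ)
    (hψpos : ∀ t, 0 ≤ t → 0 < ψ t ∧ ψ t ≤ 1)
    (hψmono : ∀ s t : ℝ, 0 ≤ s → s ≤ t → ψ t ≤ ψ s)
    (hψasym : ∃ C₀ K : ℝ, 0 < C₀ ∧ 0 < K ∧ ∀ t : ℝ, K ≤ t →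
      |ψ t - Ψ * t ^ (-α)| ≤ C₀ * t ^ (-α - δ))
    (n0 : ℝ → ℝ) (hn0 : ∀ a, 0 ≤ n0 a)
    (hn0i : IntegrableOn (fun a => n0 a * (1 + a) ^ α) (Ioi 0))
    (hM : ∫ a in Ioi (0:ℝ), n0 a * (1 + a) ^ α ≤ M) :
    ∃ C : ℝ, 0 < C ∧ ∀ t : ℝ, 0 ≤ t →
      (∫ a in Ioi (0:ℝ), (ψ (a + t) / ψ a) * n0 a) ≤
        C * M * 2 ^ α * (1 + t) ^ (-α) := by
  obtain ⟨C₀, K, -, -, hasym⟩ := hψasym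
  have hlim := tendsto_mul_one_add_rpow_of_tendsto_mul_rpow
    (tendsto_mul_rpow_of_abs_sub_le hδ hasym)
  obtain ⟨C, hC, hratio⟩ := exists_ratio_le_of_rpow_bounds hα.le (fun t ht => (hψpos t ht).1)
    (exists_rpow_bounds_of_tendsto hΨ hα.le hψpos hψmono hlim)
  have hM0 : 0 ≤ M := (setIntegral_nonneg measurableSet_Ioi fun a (ha : 0 < a) =>
    mul_nonneg (hn0 a) (rpow_nonneg (by linarith) _)).trans hM
  refine ⟨C, hC, fun t ht => ?_⟩
  have h2α : 1 ≤ (2 : ℝ) ^ α := one_le_rpow one_le_two hα.le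
  calc ∫ a in Ioi (0:ℝ), (ψ (a + t) / ψ a) * n0 a
      ≤ C * (1 + t) ^ (-α) * ∫ a in Ioi (0:ℝ), n0 a * (1 + a) ^ α := by
        refine setIntegral_le_const_mul_of_le measurableSet_Ioi (fun a (ha : 0 < a) => ?_)
          (fun a (ha : 0 < a) => ?_) hn0i
        · exact mul_nonneg (div_nonneg (hψpos _ (by linarith)).1.le (hψpos a ha.le).1.le)
            (hn0 a)
        · calc ψ (a + t) / ψ a * n0 a ≤ C * (1 + a) ^ α * (1 + t) ^ (-α) * n0 a := by
                gcongr
                · exact hn0 a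
                · exact hratio a t ha.le ht
            _ = C * (1 + t) ^ (-α) * (n0 a * (1 + a) ^ α) := by ring
    _ ≤ C * (1 + t) ^ (-α) * M := by gcongr
    _ ≤ C * M * 2 ^ α * (1 + t) ^ (-α) := by
        have : 0 ≤ C * M * (1 + t) ^ (-α) := by positivity
        nlinarith

theorem quantified_renewal_tail (ψ : ℝ → ℝ) (Ψ α δ M : ℝ)
    (hΨ : 0 < Ψ) (hα : 0 < α) (hα1 : α < 1) (hδ : 0 < δ) (hδ1 : δ < 1 - α)
    (hψpos : ∀ t, 0 ≤ t → 0 < ψ t ∧ ψ t ≤ 1)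
    (hψmono : ∀ s t : ℝ, 0 ≤ s → s ≤ t → ψ t ≤ ψ s)
    (hψasym : ∃ C₀ K : ℝ, 0 < C₀ ∧ 0 < K ∧ ∀ t : ℝ, K ≤ t →
      |ψ t - Ψ * t ^ (-α)| ≤ C₀ * t ^ (-α - δ))
    (n0 : ℝ → ℝ) (hn0 : ∀ a, 0 ≤ n0 a)
    (hn0i : IntegrableOn (fun a => n0 a * (1 + a) ^ α) (Ioi 0))
    (hM : ∫ a in Ioi (0:ℝ), n0 a * (1 + a) ^ α ≤ M) :
    ∃ C : ℝ, 0 < C ∧ ∀ t : ℝ, 0 ≤ t →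
      (∫ a in Ioi (0:ℝ), (ψ (a + t) / ψ a) * n0 a) ≤
        C * M * 2 ^ α * (1 + t) ^ (-α) :=
  quantified_renewal_tail_general ψ Ψ α δ M hΨ hα hδ hψpos hψmono hψasym n0 hn0 hn0i hM
end

section
/- Under the same assumptions as the moment conservation statement, the second moment of a mild solution of ∂ₜ^α ρ = D_α Δρ with D_α = σ²/(2dΨΓ(1−α)) grows as ∫|x|²ρ(t,dx) = ∫|x|²ρ⁰(dx) + (sin(πα)/(πα)) (σ²/Ψ) (∫ρ⁰(dx)) t^α for all t ≥ 0. -/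
/-!
Test the mild formulation against the radial truncations `χ(‖x‖²/c)` of `1` and `‖x‖² χ(‖x‖²/c)`
of `‖x‖²`, where `χ` is smooth, equal to `1` on `(-∞, 1]` and to `0` on `[2, ∞)`. By
`Δ ψ(‖x‖²) = 4‖x‖² ψ''(‖x‖²) + 2d ψ'(‖x‖²)` and scaling, their Laplacians are bounded uniformly in
`c` and tend to `0` and `2d` as `c → ∞`. The second-moment bound on compact time intervals
bounds the mass there, so dominated convergence in `x` and then in `s` passes to the limit in the
mild equation: first the mass is conserved, then `∫‖x‖² dρ(t) = ∫‖x‖² dρ⁰ + (D_α/Γ(α)) · 2d m₀ · t^α/α`. The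
reflection formula `Γ(α) Γ(1-α) = π / sin(πα)` turns the constant into `sin(πα)/(πα) · σ²/Ψ`.
-/

open MeasureTheory Set Filter intervalIntegral Real

noncomputable def laplacian (d : ℕ) (φ : EuclideanSpace ℝ (Fin d) → ℝ)
    (x : EuclideanSpace ℝ (Fin d)) : ℝ :=
  ∑ i : Fin d, iteratedFDeriv ℝ 2 φ x
    ![EuclideanSpace.single i (1:ℝ), EuclideanSpace.single i (1:ℝ)]

open Topology Module InnerProductSpace
open scoped Laplacian

theorem laplacian_eq_laplacian {d : ℕ} (φ : EuclideanSpace ℝ (Fin d) → ℝ) :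
    laplacian d φ = Δ φ := by
  rw [laplacian_eq_iteratedFDeriv_orthonormalBasis φ (EuclideanSpace.basisFun (Fin d) ℝ)]
  ext x
  simp [laplacian, EuclideanSpace.basisFun_apply]

noncomputable def radialLaplacian (n : ℕ) (ψ : ℝ → ℝ) (u : ℝ) : ℝ :=
  4 * u * deriv (deriv ψ) u + 2 * n * deriv ψ u

section RadialCalculus

variable {E : Type*} [NormedAddCommGroup E] [InnerProductSpace ℝ E] {ψ : ℝ → ℝ}

theorem fderiv_comp_norm_sq (hψ : Differentiable ℝ ψ) :
    fderiv ℝ (fun y : E => ψ (‖y‖ ^ 2)) = fun y => deriv ψ (‖y‖ ^ 2) • (2 • innerSL ℝ y) :=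
  funext fun y => ((hψ _).hasDerivAt.comp_hasFDerivAt y
    (hasStrictFDerivAt_norm_sq y).hasFDerivAt).fderiv

theorem iteratedFDeriv_two_comp_norm_sq_apply (hψ : ContDiff ℝ 2 ψ) (x v : E) :
    iteratedFDeriv ℝ 2 (fun y : E => ψ (‖y‖ ^ 2)) x ![v, v] =
      4 * deriv (deriv ψ) (‖x‖ ^ 2) * inner ℝ x v ^ 2 + 2 * deriv ψ (‖x‖ ^ 2) * ‖v‖ ^ 2 := by
  have hψ' : ContDiff ℝ 1 (deriv ψ) := (contDiff_succ_iff_deriv.mp hψ).2.2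
  have hdψ' : HasFDerivAt (fun y : E => deriv ψ (‖y‖ ^ 2))
      (deriv (deriv ψ) (‖x‖ ^ 2) • (2 • innerSL ℝ x)) x :=
    ((hψ'.differentiable one_ne_zero _).hasDerivAt).comp_hasFDerivAt x
      (hasStrictFDerivAt_norm_sq x).hasFDerivAt
  have hinner : HasFDerivAt (fun y : E => 2 • innerSL ℝ y) (2 • innerSL ℝ) x :=
    (2 • innerSL ℝ : E →L[ℝ] E →L[ℝ] ℝ).hasFDerivAt
  rw [iteratedFDeriv_two_apply, fderiv_comp_norm_sq (hψ.differentiable (by norm_num)),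
    (hdψ'.fun_smul hinner).fderiv]
  simp only [Fin.isValue, Matrix.cons_val_zero, Matrix.cons_val_one, Matrix.cons_val_fin_one,
    add_apply, smul_apply, ContinuousLinearMap.smulRight_apply, coe_innerSL_apply, nsmul_eq_mul,
    Nat.cast_ofNat, smul_eq_mul]
  rw [innerSL_apply_apply, real_inner_self_eq_norm_sq]
  ring

variable [FiniteDimensional ℝ E]

theorem laplacian_comp_norm_sq (hψ : ContDiff ℝ 2 ψ) (x : E) :
    Δ (fun y : E => ψ (‖y‖ ^ 2)) x = radialLaplacian (finrank ℝ E) ψ (‖x‖ ^ 2) := by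
  have hsq : ∑ i, inner ℝ x (stdOrthonormalBasis ℝ E i) ^ 2 = ‖x‖ ^ 2 := by
    simpa [real_inner_comm, sq_abs] using (stdOrthonormalBasis ℝ E).sum_sq_norm_inner_right x
  rw [laplacian_eq_iteratedFDeriv_stdOrthonormalBasis]
  simp only [iteratedFDeriv_two_comp_norm_sq_apply hψ, OrthonormalBasis.norm_eq_one,
    Finset.sum_add_distrib, ← Finset.mul_sum, hsq]
  simp only [one_pow, Finset.sum_const, Finset.card_univ, Fintype.card_fin, nsmul_eq_mul, mul_one,
    radialLaplacian]
  ring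

end RadialCalculus

section RadialProfile

variable {n : ℕ} {ψ ψ₁ ψ₂ : ℝ → ℝ} {u : ℝ}

theorem radialLaplacian_congr (h : ψ₁ =ᶠ[𝓝 u] ψ₂) :
    radialLaplacian n ψ₁ u = radialLaplacian n ψ₂ u := by
  rw [radialLaplacian, radialLaplacian, h.deriv_eq, h.deriv.deriv_eq]

theorem radialLaplacian_const (c : ℝ) : radialLaplacian n (fun _ => c) u = 0 := by
  simp [radialLaplacian]

theorem radialLaplacian_id : radialLaplacian n id u = 2 * n := by
  simp [radialLaplacian]

theorem radialLaplacian_const_mul (c : ℝ) :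
    radialLaplacian n (fun u => c * ψ u) u = c * radialLaplacian n ψ u := by
  simp only [radialLaplacian, deriv_const_mul_field']
  ring

theorem radialLaplacian_comp_div (c : ℝ) :
    radialLaplacian n (fun u => ψ (u / c)) u = radialLaplacian n ψ (u / c) / c := by
  have hderiv : ∀ f : ℝ → ℝ, deriv (fun u => f (u / c)) = fun u => c⁻¹ * deriv f (u / c) := by
    intro f
    funext u
    simpa only [div_eq_inv_mul, smul_eq_mul] using deriv_comp_mul_left c⁻¹ f u
  simp only [radialLaplacian, hderiv, deriv_const_mul_field']
  ring

theorem continuous_radialLaplacian (hψ : ContDiff ℝ 2 ψ) : Continuous (radialLaplacian n ψ) := by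
  have hψ' : ContDiff ℝ 1 (deriv ψ) := (contDiff_succ_iff_deriv.mp hψ).2.2
  have hψ'' : ContDiff ℝ 0 (deriv (deriv ψ)) := (contDiff_succ_iff_deriv.mp hψ').2.2
  unfold radialLaplacian
  fun_prop

end RadialProfile

theorem Continuous.exists_abs_le_of_eq_zero_of_gt {g : ℝ → ℝ} (hg : Continuous g) {a : ℝ}
    (hga : ∀ u, a < u → g u = 0) (b : ℝ) : ∃ C, ∀ u, b ≤ u → |g u| ≤ C := by
  obtain ⟨C, hC⟩ := (isCompact_Icc (a := b) (b := a)).exists_bound_of_continuousOn hg.continuousOn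
  refine ⟨max C 0, fun u hu => ?_⟩
  rcases le_or_gt u a with h | h
  · exact (Real.norm_eq_abs _ ▸ hC u ⟨hu, h⟩).trans (le_max_left _ _)
  · simp [hga u h]

noncomputable def cutoff (u : ℝ) : ℝ := smoothTransition (2 - u)

namespace cutoff

theorem contDiff : ContDiff ℝ 2 cutoff :=
  smoothTransition.contDiff.comp (contDiff_const.sub contDiff_id)

theorem eq_one {u : ℝ} (hu : u ≤ 1) : cutoff u = 1 :=
  smoothTransition.one_of_one_le (by linarith)

theorem eq_zero {u : ℝ} (hu : 2 ≤ u) : cutoff u = 0 :=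
  smoothTransition.zero_of_nonpos (by linarith)

theorem nonneg (u : ℝ) : 0 ≤ cutoff u := smoothTransition.nonneg _

theorem le_one (u : ℝ) : cutoff u ≤ 1 := smoothTransition.le_one _

theorem eventuallyEq_one {u : ℝ} (hu : u < 1) : cutoff =ᶠ[𝓝 u] fun _ => 1 := by
  filter_upwards [eventually_lt_nhds hu] with v hv using eq_one hv.le

theorem eventuallyEq_zero {u : ℝ} (hu : 2 < u) : cutoff =ᶠ[𝓝 u] fun _ => 0 := by
  filter_upwards [eventually_gt_nhds hu] with v hv using eq_zero hv.le

end cutoff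

theorem radialLaplacian_cutoff {n : ℕ} {u : ℝ} (hu : 2 < u) : radialLaplacian n cutoff u = 0 := by
  rw [radialLaplacian_congr (cutoff.eventuallyEq_zero hu), radialLaplacian_const]

theorem radialLaplacian_mul_cutoff_of_lt {n : ℕ} {u : ℝ} (hu : u < 1) :
    radialLaplacian n (fun v => v * cutoff v) u = 2 * n := by
  have h : (fun v => v * cutoff v) =ᶠ[𝓝 u] id := by
    filter_upwards [cutoff.eventuallyEq_one hu] with v hv
    simp [hv]
  rw [radialLaplacian_congr h, radialLaplacian_id]

theorem radialLaplacian_mul_cutoff_of_gt {n : ℕ} {u : ℝ} (hu : 2 < u) :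
    radialLaplacian n (fun v => v * cutoff v) u = 0 := by
  have h : (fun v => v * cutoff v) =ᶠ[𝓝 u] fun _ => 0 := by
    filter_upwards [cutoff.eventuallyEq_zero hu] with v hv
    simp [hv]
  rw [radialLaplacian_congr h, radialLaplacian_const]

theorem integral_rpow_sub_left {α : ℝ} (hα : 0 < α) (t : ℝ) :
    ∫ s in (0:ℝ)..t, (t - s) ^ (α - 1) = t ^ α / α := by
  rw [integral_comp_sub_left (fun u => u ^ (α - 1)), sub_self, sub_zero,
    integral_rpow (Or.inl (by linarith)), sub_add_cancel, zero_rpow hα.ne', sub_zero]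

theorem intervalIntegrable_rpow_sub_left {α : ℝ} (hα : 0 < α) (t : ℝ) :
    IntervalIntegrable (fun s => (t - s) ^ (α - 1)) volume 0 t := by
  simpa using
    ((intervalIntegrable_rpow' (a := 0) (b := t) (r := α - 1) (by linarith)).comp_sub_left t).symm

section TestFunctions

variable {E : Type*} [NormedAddCommGroup E] [InnerProductSpace ℝ E] [FiniteDimensional ℝ E]

theorem ContDiff.continuous_laplacian {F : Type*} [NormedAddCommGroup F] [NormedSpace ℝ F]
    {f : E → F} (hf : ContDiff ℝ 2 f) : Continuous (Δ f) := by
  rw [laplacian_eq_iteratedFDeriv_stdOrthonormalBasis]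
  have := hf.continuous_iteratedFDeriv (m := 2) le_rfl
  fun_prop

theorem HasCompactSupport.laplacian {F : Type*} [NormedAddCommGroup F] [NormedSpace ℝ F]
    {f : E → F} (hf : HasCompactSupport f) :
    HasCompactSupport (Δ f) := by
  refine (hf.iteratedFDeriv (𝕜 := ℝ) 2).mono fun x hx h => hx ?_
  simp [laplacian_eq_iteratedFDeriv_stdOrthonormalBasis, h]

theorem hasCompactSupport_comp_norm_sq {ψ : ℝ → ℝ} {a : ℝ} (hψ : ∀ u, a ≤ u → ψ u = 0) :
    HasCompactSupport (fun x : E => ψ (‖x‖ ^ 2)) :=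
  HasCompactSupport.intro (isCompact_closedBall 0 √a) fun x hx =>
    hψ _ (lt_sq_of_sqrt_lt (by simpa using hx)).le

theorem laplacian_cutoff_norm_sq (c : ℝ) (x : E) :
    Δ (fun y : E => cutoff (‖y‖ ^ 2 / c)) x =
      radialLaplacian (finrank ℝ E) cutoff (‖x‖ ^ 2 / c) / c :=
  (laplacian_comp_norm_sq (ψ := fun u => cutoff (u / c))
    (cutoff.contDiff.comp (contDiff_id.div_const c)) x).trans (radialLaplacian_comp_div c)

theorem laplacian_norm_sq_mul_cutoff {c : ℝ} (hc : c ≠ 0) (x : E) :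
    Δ (fun y : E => ‖y‖ ^ 2 * cutoff (‖y‖ ^ 2 / c)) x =
      radialLaplacian (finrank ℝ E) (fun v => v * cutoff v) (‖x‖ ^ 2 / c) := by
  have hψ : (fun u => u * cutoff (u / c)) = fun u => c * ((u / c) * cutoff (u / c)) := by
    funext u
    field_simp
  rw [laplacian_comp_norm_sq (ψ := fun u => u * cutoff (u / c))
    (contDiff_id.mul (cutoff.contDiff.comp (contDiff_id.div_const c))), hψ,
    radialLaplacian_const_mul, radialLaplacian_comp_div (ψ := fun v => v * cutoff v),
    mul_div_cancel₀ _ hc]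

end TestFunctions

theorem tendsto_integral_of_abs_le {X ι : Type*} [MeasurableSpace X] [TopologicalSpace X]
    [OpensMeasurableSpace X] {μ : Measure X} {l : Filter ι} [l.IsCountablyGenerated]
    {F : ι → X → ℝ} {f g : X → ℝ} (hF : ∀ᶠ i in l, Continuous (F i))
    (hFg : ∀ᶠ i in l, ∀ x, |F i x| ≤ g x) (hg : Integrable g μ)
    (hFf : ∀ x, Tendsto (fun i => F i x) l (𝓝 (f x))) :
    Tendsto (fun i => ∫ x, F i x ∂μ) l (𝓝 (∫ x, f x ∂μ)) :=
  tendsto_integral_filter_of_dominated_convergence g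
    (hF.mono fun _ h => h.aestronglyMeasurable) (hFg.mono fun _ h => ae_of_all _ h) hg
    (ae_of_all _ hFf)

section VagueContinuity

variable {E : Type*} [TopologicalSpace E] [MeasurableSpace E]

def VaguelyContinuousOn (ρ : ℝ → Measure E) (s : Set ℝ) : Prop :=
  ∀ φ : E → ℝ, Continuous φ → HasCompactSupport φ → ContinuousOn (fun t => ∫ x, φ x ∂ρ t) s

theorem tendsto_intervalIntegral_rpow_sub_mul_integral [OpensMeasurableSpace E]
    {ρ : ℝ → Measure E} [∀ t, IsFiniteMeasure (ρ t)] {α : ℝ} (hα : 0 < α)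
    (hcont : VaguelyContinuousOn ρ (Ici 0))
    {t M : ℝ} (ht : 0 ≤ t) (hM : ∀ s ∈ Icc 0 t, (ρ s).real univ ≤ M)
    {ι : Type*} {l : Filter ι} [l.IsCountablyGenerated] {ψ : ι → E → ℝ} {K L : ℝ} (hK : 0 ≤ K)
    (hψ : ∀ᶠ i in l, Continuous (ψ i) ∧ HasCompactSupport (ψ i))
    (hψK : ∀ᶠ i in l, ∀ x, |ψ i x| ≤ K) (hψL : ∀ x, Tendsto (fun i => ψ i x) l (𝓝 L)) :
    Tendsto (fun i => ∫ s in (0:ℝ)..t, (t - s) ^ (α - 1) * ∫ x, ψ i x ∂ρ s) l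
      (𝓝 (∫ s in (0:ℝ)..t, (t - s) ^ (α - 1) * ((ρ s).real univ * L))) := by
  have hinner : ∀ s, Tendsto (fun i => ∫ x, ψ i x ∂ρ s) l (𝓝 ((ρ s).real univ * L)) := by
    intro s
    simpa using tendsto_integral_of_abs_le (hψ.mono fun _ h => h.1) hψK (integrable_const K) hψL
  refine intervalIntegral.tendsto_integral_filter_of_dominated_convergence
    (fun s => (t - s) ^ (α - 1) * (K * M)) ?_ ?_
    ((intervalIntegrable_rpow_sub_left hα t).mul_const _)
    (ae_of_all _ fun s _ => (hinner s).const_mul _)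
  · filter_upwards [hψ] with i hi
    rw [uIoc_of_le ht]
    exact (((measurable_const.sub measurable_id).pow_const _).aestronglyMeasurable).mul
      (((hcont _ hi.1 hi.2).mono fun s hs => mem_Ici.2 hs.1.le).aestronglyMeasurable
        measurableSet_Ioc)
  · filter_upwards [hψK] with i hi
    refine ae_of_all _ fun s hs => ?_
    rw [uIoc_of_le ht] at hs
    have hw : 0 ≤ (t - s) ^ (α - 1) := rpow_nonneg (by linarith [hs.2]) _
    rw [norm_mul, Real.norm_of_nonneg hw]
    refine mul_le_mul_of_nonneg_left ?_ hw
    calc ‖∫ x, ψ i x ∂ρ s‖ ≤ K * (ρ s).real univ :=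
          norm_integral_le_of_norm_le_const (ae_of_all _ hi)
      _ ≤ K * M := mul_le_mul_of_nonneg_left (hM s ⟨hs.1.le, hs.2⟩) hK

end VagueContinuity

section MildSolution

variable {E : Type*} [NormedAddCommGroup E] [InnerProductSpace ℝ E] [FiniteDimensional ℝ E]
  [MeasurableSpace E] [BorelSpace E]

def IsMildSolution (κ α : ℝ) (ρ0 : Measure E) (ρ : ℝ → Measure E) : Prop :=
  ∀ φ : E → ℝ, ContDiff ℝ 2 φ → HasCompactSupport φ → ∀ t : ℝ, 0 ≤ t →
    ∫ x, φ x ∂ρ t = ∫ x, φ x ∂ρ0 + κ * ∫ s in (0:ℝ)..t, (t - s) ^ (α - 1) * ∫ x, Δ φ x ∂ρ s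

variable {κ α : ℝ} {ρ0 : Measure E} {ρ : ℝ → Measure E} [∀ t, IsFiniteMeasure (ρ t)]

theorem exists_measureReal_univ_le (hcont : VaguelyContinuousOn ρ (Ici 0)) {T C : ℝ}
    (hmom : ∀ s ∈ Icc 0 T, Integrable (fun x => ‖x‖ ^ 2) (ρ s))
    (hC : ∀ s ∈ Icc 0 T, ∫ x, ‖x‖ ^ 2 ∂ρ s ≤ C) :
    ∃ M, ∀ s ∈ Icc 0 T, (ρ s).real univ ≤ M := by
  set χ : E → ℝ := fun x => cutoff (‖x‖ ^ 2)
  have hχc : Continuous χ := cutoff.contDiff.continuous.comp (continuous_norm.pow 2)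
  have hχs : HasCompactSupport χ := hasCompactSupport_comp_norm_sq fun _ => cutoff.eq_zero
  obtain ⟨B, hB⟩ := isCompact_Icc.exists_bound_of_continuousOn
    ((hcont χ hχc hχs).mono Icc_subset_Ici_self)
  have hχ : ∀ x, 1 ≤ χ x + ‖x‖ ^ 2 := by
    intro x
    rcases le_or_gt (‖x‖ ^ 2) 1 with h | h
    · rw [show χ x = 1 from cutoff.eq_one h]
      exact le_add_of_nonneg_right (by positivity)
    · linarith [cutoff.nonneg (‖x‖ ^ 2)]
  refine ⟨B + C, fun s hs => ?_⟩
  have hχi : Integrable χ (ρ s) := hχc.integrable_of_hasCompactSupport hχs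
  calc (ρ s).real univ = ∫ _, (1 : ℝ) ∂ρ s := by simp
    _ ≤ ∫ x, (χ x + ‖x‖ ^ 2) ∂ρ s := integral_mono (integrable_const 1) (hχi.add (hmom s hs)) hχ
    _ = ∫ x, χ x ∂ρ s + ∫ x, ‖x‖ ^ 2 ∂ρ s := integral_add hχi (hmom s hs)
    _ ≤ B + C := add_le_add ((le_abs_self _).trans (hB s hs)) (hC s hs)

theorem IsMildSolution.integral_eq_of_tendsto (hρ : IsMildSolution κ α ρ0 ρ) (hα : 0 < α)
    (hcont : VaguelyContinuousOn ρ (Ici 0))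
    {t M : ℝ} (ht : 0 ≤ t) (hM : ∀ s ∈ Icc 0 t, (ρ s).real univ ≤ M)
    {ι : Type*} {l : Filter ι} [l.IsCountablyGenerated] [l.NeBot] {φ : ι → E → ℝ}
    {f g : E → ℝ} {K L : ℝ} (hφ : ∀ᶠ i in l, ContDiff ℝ 2 (φ i) ∧ HasCompactSupport (φ i))
    (hφg : ∀ᶠ i in l, ∀ x, |φ i x| ≤ g x) (hgt : Integrable g (ρ t)) (hg0 : Integrable g ρ0)
    (hφf : ∀ x, Tendsto (fun i => φ i x) l (𝓝 (f x)))
    (hΔK : ∀ᶠ i in l, ∀ x, |Δ (φ i) x| ≤ K) (hΔL : ∀ x, Tendsto (fun i => Δ (φ i) x) l (𝓝 L)) :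
    ∫ x, f x ∂ρ t =
      ∫ x, f x ∂ρ0 + κ * ∫ s in (0:ℝ)..t, (t - s) ^ (α - 1) * ((ρ s).real univ * L) := by
  have hφc : ∀ᶠ i in l, Continuous (φ i) := hφ.mono fun _ h => h.1.continuous
  obtain ⟨i₀, hi₀⟩ := hΔK.exists
  have hmemory := tendsto_intervalIntegral_rpow_sub_mul_integral hα hcont ht hM
    ((abs_nonneg _).trans (hi₀ 0)) (hφ.mono fun _ h => ⟨h.1.continuous_laplacian, h.2.laplacian⟩)
    hΔK hΔL
  refine tendsto_nhds_unique (tendsto_integral_of_abs_le hφc hφg hgt hφf) ?_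
  refine ((tendsto_integral_of_abs_le hφc hφg hg0 hφf).add (hmemory.const_mul κ)).congr' ?_
  filter_upwards [hφ] with i hi using (hρ (φ i) hi.1 hi.2 t ht).symm

theorem IsMildSolution.measureReal_univ_eq [IsFiniteMeasure ρ0] (hρ : IsMildSolution κ α ρ0 ρ)
    (hα : 0 < α) (hcont : VaguelyContinuousOn ρ (Ici 0))
    {t M : ℝ} (ht : 0 ≤ t) (hM : ∀ s ∈ Icc 0 t, (ρ s).real univ ≤ M) :
    (ρ t).real univ = ρ0.real univ := by
  obtain ⟨K, hK⟩ := (continuous_radialLaplacian (n := finrank ℝ E) cutoff.contDiff)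
    |>.exists_abs_le_of_eq_zero_of_gt (fun _ => radialLaplacian_cutoff) 0
  have hK0 : 0 ≤ K := (abs_nonneg _).trans (hK 0 le_rfl)
  have hΔ : ∀ c > 0, ∀ x : E, |Δ (fun y : E => cutoff (‖y‖ ^ 2 / c)) x| ≤ K / c := by
    intro c hc x
    rw [laplacian_cutoff_norm_sq, abs_div, abs_of_pos hc]
    exact div_le_div_of_nonneg_right (hK _ (by positivity)) hc.le
  have h := hρ.integral_eq_of_tendsto hα hcont ht hM (l := atTop)
    (φ := fun c x => cutoff (‖x‖ ^ 2 / c)) (g := fun _ => 1) (f := fun _ => 1) (K := K) (L := 0)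
    ?_ ?_ (integrable_const 1) (integrable_const 1) ?_ ?_ ?_
  · simpa using h
  · filter_upwards [eventually_gt_atTop 0] with c hc
    exact ⟨cutoff.contDiff.comp ((contDiff_norm_sq ℝ).div_const c),
      hasCompactSupport_comp_norm_sq (ψ := fun u => cutoff (u / c)) (a := 2 * c)
        fun u hu => cutoff.eq_zero (by rwa [le_div_iff₀ hc])⟩
  · exact Eventually.of_forall fun c x => by
      rw [abs_of_nonneg (cutoff.nonneg _)]
      exact cutoff.le_one _
  · intro x
    refine tendsto_const_nhds.congr' ?_
    filter_upwards [eventually_gt_atTop 0, eventually_ge_atTop (‖x‖ ^ 2)] with c hc hxc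
    exact (cutoff.eq_one (by rwa [div_le_one hc])).symm
  · filter_upwards [eventually_ge_atTop 1] with c hc x
    exact (hΔ c (by linarith) x).trans (div_le_self hK0 hc)
  · intro x
    refine squeeze_zero_norm' ?_ ((tendsto_const_nhds (x := K)).div_atTop tendsto_id)
    filter_upwards [eventually_gt_atTop 0] with c hc using hΔ c hc x

theorem IsMildSolution.integral_norm_sq_eq [IsFiniteMeasure ρ0] (hρ : IsMildSolution κ α ρ0 ρ)
    (hα : 0 < α) (hcont : VaguelyContinuousOn ρ (Ici 0))
    {t M : ℝ} (ht : 0 ≤ t) (hM : ∀ s ∈ Icc 0 t, (ρ s).real univ ≤ M)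
    (hmom : Integrable (fun x => ‖x‖ ^ 2) (ρ t)) (hmom0 : Integrable (fun x => ‖x‖ ^ 2) ρ0) :
    ∫ x, ‖x‖ ^ 2 ∂ρ t =
      ∫ x, ‖x‖ ^ 2 ∂ρ0 + κ * (2 * finrank ℝ E * ρ0.real univ * (t ^ α / α)) := by
  have hprofile : ContDiff ℝ 2 fun v : ℝ => v * cutoff v := contDiff_id.mul cutoff.contDiff
  obtain ⟨K, hK⟩ := (continuous_radialLaplacian (n := finrank ℝ E) hprofile)
    |>.exists_abs_le_of_eq_zero_of_gt (fun _ => radialLaplacian_mul_cutoff_of_gt) 0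
  have h := hρ.integral_eq_of_tendsto hα hcont ht hM (l := atTop)
    (φ := fun c x => ‖x‖ ^ 2 * cutoff (‖x‖ ^ 2 / c)) (g := fun x => ‖x‖ ^ 2)
    (f := fun x => ‖x‖ ^ 2) (K := K) (L := 2 * finrank ℝ E) ?_ ?_ hmom hmom0 ?_ ?_ ?_
  · have hmass : ∀ s ∈ uIcc 0 t, (t - s) ^ (α - 1) * ((ρ s).real univ * (2 * finrank ℝ E)) =
        (t - s) ^ (α - 1) * (2 * finrank ℝ E * ρ0.real univ) := by
      intro s hs
      rw [uIcc_of_le ht] at hs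
      rw [hρ.measureReal_univ_eq hα hcont hs.1 fun r hr => hM r ⟨hr.1, hr.2.trans hs.2⟩]
      ring
    rw [h, integral_congr hmass, intervalIntegral.integral_mul_const, integral_rpow_sub_left hα]
    ring
  · filter_upwards [eventually_gt_atTop 0] with c hc
    exact ⟨(contDiff_norm_sq ℝ).mul (cutoff.contDiff.comp ((contDiff_norm_sq ℝ).div_const c)),
      hasCompactSupport_comp_norm_sq (ψ := fun u => u * cutoff (u / c)) (a := 2 * c)
        fun u hu => by rw [cutoff.eq_zero (by rwa [le_div_iff₀ hc]), mul_zero]⟩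
  · exact Eventually.of_forall fun c x => by
      rw [abs_of_nonneg (mul_nonneg (by positivity) (cutoff.nonneg _))]
      exact mul_le_of_le_one_right (by positivity) (cutoff.le_one _)
  · intro x
    refine tendsto_const_nhds.congr' ?_
    filter_upwards [eventually_gt_atTop 0, eventually_ge_atTop (‖x‖ ^ 2)] with c hc hxc
    rw [cutoff.eq_one (by rwa [div_le_one hc]), mul_one]
  · filter_upwards [eventually_gt_atTop 0] with c hc x
    rw [laplacian_norm_sq_mul_cutoff hc.ne']
    exact hK _ (by positivity)
  · intro x
    refine tendsto_const_nhds.congr' ?_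
    filter_upwards [eventually_gt_atTop 0, eventually_gt_atTop (‖x‖ ^ 2)] with c hc hxc
    rw [laplacian_norm_sq_mul_cutoff hc.ne',
      radialLaplacian_mul_cutoff_of_lt (by rwa [div_lt_one hc])]

end MildSolution

theorem sin_pi_mul_div_pi (α : ℝ) : sin (π * α) / π = (Gamma α * Gamma (1 - α))⁻¹ := by
  rw [Gamma_mul_Gamma_one_sub, inv_div]

theorem second_moment_growth_general (d : ℕ) (hd : 0 < d)
    (α Ψ σ2 Dα : ℝ) (hα : 0 < α)
    (hD : Dα = σ2 / (2 * d * Ψ * Real.Gamma (1 - α)))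
    (ρ0 : Measure (EuclideanSpace ℝ (Fin d))) [IsFiniteMeasure ρ0]
    (ρ : ℝ → Measure (EuclideanSpace ℝ (Fin d)))
    (hfin : ∀ t, IsFiniteMeasure (ρ t))
    (hinit : ρ 0 = ρ0)
    (hcont : ∀ φ : EuclideanSpace ℝ (Fin d) → ℝ, Continuous φ → HasCompactSupport φ →
      ContinuousOn (fun t => ∫ x, φ x ∂(ρ t)) (Ici 0))
    (hmild : ∀ φ : EuclideanSpace ℝ (Fin d) → ℝ, ContDiff ℝ 2 φ → HasCompactSupport φ →
      ∀ t : ℝ, 0 ≤ t →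
        (∫ x, φ x ∂(ρ t)) = (∫ x, φ x ∂ρ0) +
          (Dα / Real.Gamma α) *
            ∫ s in (0:ℝ)..t, (t - s) ^ (α - 1) * ∫ x, laplacian d φ x ∂(ρ s))
    (hmom2 : ∀ t, 0 ≤ t → Integrable (fun x => ‖x‖ ^ 2) (ρ t))
    (hmom2loc : ∀ T : ℝ, 0 < T → ∃ C : ℝ, ∀ t ∈ Icc (0:ℝ) T,
      (∫ x, ‖x‖ ^ 2 ∂(ρ t)) ≤ C) :
    ∀ t : ℝ, 0 ≤ t →
      (∫ x, ‖x‖ ^ 2 ∂(ρ t)) = (∫ x, ‖x‖ ^ 2 ∂ρ0) +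
        (Real.sin (π * α) / (π * α)) * (σ2 / Ψ) * (ρ0 univ).toReal * t ^ α := by
  intro t ht
  have hρ : IsMildSolution (Dα / Gamma α) α ρ0 ρ := by
    unfold IsMildSolution
    simpa only [laplacian_eq_laplacian] using hmild
  obtain ⟨C, hC⟩ := hmom2loc (t + 1) (by linarith)
  obtain ⟨M, hM⟩ := exists_measureReal_univ_le hcont (fun s hs => hmom2 s hs.1)
    fun s hs => hC s ⟨hs.1, by linarith [hs.2]⟩
  have hsin : sin (π * α) / (π * α) = (Gamma α * Gamma (1 - α))⁻¹ / α := by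
    rw [← sin_pi_mul_div_pi, div_div]
  rw [hρ.integral_norm_sq_eq hα hcont ht hM (hmom2 t ht) (hinit ▸ hmom2 0 le_rfl),
    finrank_euclideanSpace_fin, measureReal_def, hD, hsin]
  have hd' : (d : ℝ) ≠ 0 := by positivity
  field_simp

theorem second_moment_growth (d : ℕ) (hd : 0 < d)
    (α Ψ σ2 Dα : ℝ) (hα : 0 < α) (hα1 : α < 1) (hΨ : 0 < Ψ) (hσ2 : 0 < σ2)
    (hD : Dα = σ2 / (2 * d * Ψ * Real.Gamma (1 - α)))
    (ρ0 : Measure (EuclideanSpace ℝ (Fin d))) [IsFiniteMeasure ρ0]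
    (ρ : ℝ → Measure (EuclideanSpace ℝ (Fin d)))
    (hfin : ∀ t, IsFiniteMeasure (ρ t))
    (hinit : ρ 0 = ρ0)
    (hcont : ∀ φ : EuclideanSpace ℝ (Fin d) → ℝ, Continuous φ → HasCompactSupport φ →
      ContinuousOn (fun t => ∫ x, φ x ∂(ρ t)) (Ici 0))
    (hmild : ∀ φ : EuclideanSpace ℝ (Fin d) → ℝ, ContDiff ℝ 2 φ → HasCompactSupport φ →
      ∀ t : ℝ, 0 ≤ t →
        (∫ x, φ x ∂(ρ t)) = (∫ x, φ x ∂ρ0) +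
          (Dα / Real.Gamma α) *
            ∫ s in (0:ℝ)..t, (t - s) ^ (α - 1) * ∫ x, laplacian d φ x ∂(ρ s))
    (hmom2 : ∀ t, 0 ≤ t → Integrable (fun x => ‖x‖ ^ 2) (ρ t))
    (hmom2loc : ∀ T : ℝ, 0 < T → ∃ C : ℝ, ∀ t ∈ Icc (0:ℝ) T,
      (∫ x, ‖x‖ ^ 2 ∂(ρ t)) ≤ C) :
    ∀ t : ℝ, 0 ≤ t →
      (∫ x, ‖x‖ ^ 2 ∂(ρ t)) = (∫ x, ‖x‖ ^ 2 ∂ρ0) +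
        (Real.sin (π * α) / (π * α)) * (σ2 / Ψ) * (ρ0 univ).toReal * t ^ α :=
  second_moment_growth_general d hd α Ψ σ2 Dα hα hD ρ0 ρ hfin hinit hcont hmild hmom2 hmom2loc
end
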